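/- arXiv:2402.03098 — 2 statements merged into one kernel-verified Lean document; each statement's English description precedes it below -/
import Mathlib

section
/- For an integer $1 \le m \le n$ and a vector $\lambda \in \mathbb{R}^n$ lying in the Gårding cone $\Gamma_m$ (i.e. $\sigma_k(\lambda) > 0$ for all $1 \le k \le m$), Maclaurin's inequality holds: $\left(\binom{n}{m}^{-1}\sigma_m(\lambda)\right)^{1/m} \le \frac{1}{n}\sigma_1(\lambda)$, where $\sigma_k$ denotes the $k$-th elementary symmetric polynomial. -/
open Finset

noncomputable def esymmR (n k : ℕ) (lam : Fin n → ℝ) : ℝ :=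
  ∑ s ∈ Finset.powersetCard k (Finset.univ : Finset (Fin n)), ∏ i ∈ s, lam i

/-!
Write `E_k = σ_k / C(n, k)`. Newton's inequalities `E_k E_{k+2} ≤ E_{k+1}²` hold for every real
vector. By Rolle's theorem the derivative of `∏ (X - λᵢ)` again has only real roots, and its
normalized means agree with those of `λ` up to index `n - 1`; so differentiating reduces `n` to
`k + 2`. There the products `Pᵢ = ∏_{j ≠ i} λⱼ` satisfy `σ₁(P) = σ_{n-1}(λ)` and
`σ₂(P) = σ_{n-2}(λ) σₙ(λ)`, which turns the inequality into the case `k = 0`,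
i.e. `E₂ ≤ E₁²`; differentiating once more reduces that to two numbers, where it is AM-GM.

On `Γ_m` the means `E_0 = 1, E_1, …, E_m` are positive, so Newton's inequalities say that
`E_{k+1} / E_k` is nonincreasing, whence `E_m ≤ E_1 ^ m`.
-/

namespace Finset

variable {ι R : Type*} [Fintype ι] [DecidableEq ι] [CommSemiring R] (x : ι → R)

theorem esymm_map_val_univ_card_sub {k : ℕ} (hk : k ≤ Fintype.card ι) :
    (univ.val.map x).esymm (Fintype.card ι - k)
      = ∑ u ∈ powersetCard k univ, ∏ i ∈ uᶜ, x i := by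
  rw [esymm_map_val]
  refine sum_nbij' (·ᶜ) (·ᶜ) (fun u hu => ?_) (fun u hu => ?_) (fun u _ => compl_compl u)
    (fun u _ => compl_compl u) (fun u _ => by rw [compl_compl]) <;>
  · simp only [mem_powersetCard_univ, card_compl] at hu ⊢
    omega

theorem prod_prod_compl_singleton {u : Finset ι} (hu : u.Nonempty) :
    ∏ i ∈ u, ∏ j ∈ {i}ᶜ, x j = (∏ i ∈ uᶜ, x i) * (∏ i, x i) ^ (#u - 1) := by
  induction hu using Nonempty.cons_induction with
  | singleton a => simp
  | cons a v hav hv ih =>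
    have hcompl : x a * ∏ i ∈ (cons a v hav)ᶜ, x i = ∏ i ∈ vᶜ, x i := by
      rw [cons_eq_insert, compl_insert]
      exact mul_prod_erase _ x (mem_compl.2 hav)
    have hcard : #(cons a v hav) - 1 = (#v - 1) + 1 := by
      rw [card_cons]; have := hv.card_pos; omega
    rw [prod_cons, ih, ← hcompl, hcard, pow_succ, ← prod_compl_mul_prod {a} x, prod_singleton]
    ring

theorem esymm_map_prod_compl_singleton {k : ℕ} (hk : k + 1 ≤ Fintype.card ι) :
    (univ.val.map fun i => ∏ j ∈ {i}ᶜ, x j).esymm (k + 1)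
      = (univ.val.map x).esymm (Fintype.card ι - (k + 1))
        * (univ.val.map x).esymm (Fintype.card ι) ^ k := by
  have htop : (univ.val.map x).esymm (Fintype.card ι) = ∏ i, x i := by
    rw [esymm_map_val, ← card_univ, powersetCard_self, sum_singleton]
  rw [esymm_map_val, esymm_map_val_univ_card_sub x hk, htop, sum_mul]
  refine sum_congr rfl fun u hu => ?_
  rw [mem_powersetCard_univ] at hu
  rw [prod_prod_compl_singleton x (card_pos.1 (by omega)), hu]
  simp

end Finset

open Polynomial

theorem Polynomial.Splits.derivative {p : ℝ[X]} (hp : p.Splits) : p.derivative.Splits := by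
  have hroots := card_roots_le_derivative p
  have hle := card_roots' p.derivative
  rw [splits_iff_card_roots] at hp ⊢
  rw [natDegree_derivative] at hle ⊢
  omega

namespace Multiset

noncomputable def derivativeRoots (s : Multiset ℝ) : Multiset ℝ :=
  (derivative (s.map (X - C ·)).prod).roots

theorem splits_derivative_prod_X_sub_C (s : Multiset ℝ) :
    (derivative (s.map (X - C ·)).prod).Splits :=
  (Splits.multisetProd fun _ hf => by
    obtain ⟨a, -, rfl⟩ := Multiset.mem_map.1 hf; exact Splits.X_sub_C a).derivative

theorem card_derivativeRoots (s : Multiset ℝ) : s.derivativeRoots.card = s.card - 1 := by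
  rw [derivativeRoots, ← (splits_derivative_prod_X_sub_C s).natDegree_eq_card_roots,
    natDegree_derivative, natDegree_multiset_prod_X_sub_C_eq_card]

theorem card_mul_esymm_derivativeRoots (s : Multiset ℝ) {k : ℕ} (hk : k < s.card) :
    (s.card : ℝ) * s.derivativeRoots.esymm k = (s.card - k : ℕ) * s.esymm k := by
  set f := (s.map (X - C ·)).prod
  have hdeg : f.natDegree = s.card := natDegree_multiset_prod_X_sub_C_eq_card s
  have hlead : (derivative f).leadingCoeff = s.card := by
    rw [leadingCoeff_derivative, hdeg,
      (monic_multiset_prod_of_monic _ _ fun a _ => monic_X_sub_C a).leadingCoeff, one_mul]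
  have hf' := coeff_eq_esymm_roots_of_splits (splits_derivative_prod_X_sub_C s)
    (k := s.card - 1 - k) (by rw [natDegree_derivative, hdeg]; omega)
  have hf := Multiset.prod_X_sub_C_coeff s (k := s.card - k) (by omega)
  rw [coeff_derivative, natDegree_derivative, hdeg, hlead] at hf'
  rw [show s.card - 1 - k + 1 = s.card - k by omega, hf, show s.card - (s.card - k) = k by omega,
    show s.card - 1 - (s.card - 1 - k) = k by omega,
    show ((s.card - 1 - k : ℕ) : ℝ) + 1 = (s.card - k : ℕ) by norm_cast; omega] at hf'
  apply mul_left_cancel₀ (pow_ne_zero k (by norm_num : (-1 : ℝ) ≠ 0))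
  rw [derivativeRoots]
  linear_combination -hf'

noncomputable def esymmMean (s : Multiset ℝ) (k : ℕ) : ℝ :=
  s.esymm k / s.card.choose k

theorem esymmMean_zero (s : Multiset ℝ) : s.esymmMean 0 = 1 := by
  simp [esymmMean, Multiset.esymm]

theorem esymmMean_derivativeRoots (s : Multiset ℝ) {k : ℕ} (hk : k < s.card) :
    s.derivativeRoots.esymmMean k = s.esymmMean k := by
  obtain ⟨n, hn⟩ : ∃ n, s.card = n + 1 := ⟨s.card - 1, by omega⟩
  have hrel := s.card_mul_esymm_derivativeRoots hk
  have hchoose : (n.choose k * (n + 1) : ℝ) = (n + 1).choose k * (n + 1 - k : ℕ) := by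
    exact_mod_cast Nat.choose_mul_succ_eq n k
  have hpos : (0 : ℝ) < n.choose k := by exact_mod_cast Nat.choose_pos (by omega)
  have hpos' : (0 : ℝ) < (n + 1).choose k := by exact_mod_cast Nat.choose_pos (by omega)
  rw [esymmMean, esymmMean, card_derivativeRoots, hn, Nat.add_sub_cancel,
    div_eq_div_iff hpos.ne' hpos'.ne']
  push_cast [hn] at hrel
  apply mul_left_cancel₀ (show ((n : ℝ) + 1) ≠ 0 by positivity)
  linear_combination ((n + 1).choose k : ℝ) * hrel - s.esymm k * hchoose

theorem exists_card_eq_esymmMean_eq (s : Multiset ℝ) {j : ℕ} (hj : j ≤ s.card) :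
    ∃ t : Multiset ℝ, t.card = j ∧ ∀ i ≤ j, t.esymmMean i = s.esymmMean i := by
  obtain ⟨d, hd⟩ : ∃ d, s.card = j + d := ⟨s.card - j, by omega⟩
  induction d generalizing s with
  | zero => exact ⟨s, hd, fun _ _ => rfl⟩
  | succ d ih =>
    obtain ⟨t, ht, hts⟩ := ih s.derivativeRoots (by rw [card_derivativeRoots]; omega)
      (by rw [card_derivativeRoots]; omega)
    exact ⟨t, ht, fun i hi => (hts i hi).trans (s.esymmMean_derivativeRoots (by omega))⟩

theorem esymmMean_two_le_sq (s : Multiset ℝ) (hs : 2 ≤ s.card) :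
    s.esymmMean 2 ≤ s.esymmMean 1 ^ 2 := by
  obtain ⟨t, ht, hts⟩ := s.exists_card_eq_esymmMean_eq hs
  obtain ⟨a, b, rfl⟩ := Multiset.card_eq_two.1 ht
  rw [← hts 1 (by norm_num), ← hts 2 le_rfl, esymmMean, esymmMean, ht]
  simp only [insert_eq_cons, esymm_pair_one, esymm_pair_two]
  norm_num
  nlinarith [sq_nonneg (a - b)]

theorem exists_esymm_succ_eq_esymm_card_sub_mul_pow {R : Type*} [CommSemiring R]
    (s : Multiset R) :
    ∃ p : Multiset R, p.card = s.card ∧ ∀ k, k + 1 ≤ s.card →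
      p.esymm (k + 1) = s.esymm (s.card - (k + 1)) * s.esymm (s.card) ^ k := by
  classical
  refine ⟨Finset.univ.val.map fun i : s => ∏ j ∈ {i}ᶜ, (j : R), by simp, fun k hk => ?_⟩
  have := Finset.esymm_map_prod_compl_singleton (fun i : s => (i : R)) (k := k)
    (by rwa [Multiset.card_coe])
  rwa [Multiset.map_univ_coe, Multiset.card_coe] at this

theorem esymmMean_mul_esymmMean_le_sq_of_card_eq (s : Multiset ℝ) {k : ℕ}
    (hs : s.card = k + 2) :
    s.esymmMean k * s.esymmMean (k + 2) ≤ s.esymmMean (k + 1) ^ 2 := by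
  obtain ⟨p, hp, hps⟩ := s.exists_esymm_succ_eq_esymm_card_sub_mul_pow
  have h := p.esymmMean_two_le_sq (by omega)
  rw [esymmMean, esymmMean, hps 0 (by omega), hps 1 (by omega), hp, hs] at h
  have hchoose : (k + 2).choose k = (k + 2).choose 2 := Nat.choose_symm_add
  rw [esymmMean, esymmMean, esymmMean, hs, hchoose, Nat.choose_self, Nat.choose_succ_self_right]
  simpa [mul_div_assoc, div_mul_eq_mul_div, add_assoc, one_add_one_eq_two] using h

theorem esymmMean_mul_esymmMean_le_sq (s : Multiset ℝ) {k : ℕ} (hk : k + 2 ≤ s.card) :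
    s.esymmMean k * s.esymmMean (k + 2) ≤ s.esymmMean (k + 1) ^ 2 := by
  obtain ⟨t, ht, hts⟩ := s.exists_card_eq_esymmMean_eq hk
  rw [← hts k (by omega), ← hts (k + 1) (by omega), ← hts (k + 2) le_rfl]
  exact t.esymmMean_mul_esymmMean_le_sq_of_card_eq ht

end Multiset

section LogConcave

variable {p : ℕ → ℝ} {m : ℕ}

theorem le_mul_of_mul_le_sq (hpos : ∀ k ≤ m, 0 < p k)
    (hlc : ∀ k, k + 2 ≤ m → p k * p (k + 2) ≤ p (k + 1) ^ 2) (h0 : p 0 = 1) {k : ℕ}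
    (hk : k + 1 ≤ m) : p (k + 1) ≤ p 1 * p k := by
  induction k with
  | zero => rw [h0, mul_one]
  | succ k ih =>
    have hk0 := hpos k (by omega)
    have hk1 := hpos (k + 1) (by omega)
    refine le_of_mul_le_mul_left ?_ hk0
    calc p k * p (k + 2) ≤ p (k + 1) ^ 2 := hlc k hk
      _ ≤ p (k + 1) * (p 1 * p k) := by
        rw [sq]; exact mul_le_mul_of_nonneg_left (ih (by omega)) hk1.le
      _ = p k * (p 1 * p (k + 1)) := by ring

theorem le_pow_of_mul_le_sq (hpos : ∀ k ≤ m, 0 < p k)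
    (hlc : ∀ k, k + 2 ≤ m → p k * p (k + 2) ≤ p (k + 1) ^ 2) (h0 : p 0 = 1) {k : ℕ}
    (hk : k ≤ m) : p k ≤ p 1 ^ k := by
  induction k with
  | zero => rw [h0, pow_zero]
  | succ k ih =>
    calc p (k + 1) ≤ p 1 * p k := le_mul_of_mul_le_sq hpos hlc h0 hk
      _ ≤ p 1 * p 1 ^ k := mul_le_mul_of_nonneg_left (ih (by omega)) (hpos 1 (by omega)).le
      _ = p 1 ^ (k + 1) := (pow_succ' _ _).symm

end LogConcave

/-- Maclaurin's inequality on the Gårding cone `Γ_m`. -/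
theorem maclaurin_inequality (n m : ℕ) (hm : 1 ≤ m) (hmn : m ≤ n)
    (lam : Fin n → ℝ)
    (hGamma : ∀ k, 1 ≤ k → k ≤ m → 0 < esymmR n k lam) :
    ((n.choose m : ℝ)⁻¹ * esymmR n m lam) ^ ((1 : ℝ) / m) ≤
      (1 / n) * esymmR n 1 lam := by
  set s := univ.val.map lam
  have hcard : s.card = n := by simp [s]
  have hmean : ∀ k, s.esymmMean k = esymmR n k lam / n.choose k := fun k => by
    rw [Multiset.esymmMean, hcard, esymm_map_val]; rfl
  have hpos : ∀ k ≤ m, 0 < s.esymmMean k := fun k hk => by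
    rcases Nat.eq_zero_or_pos k with rfl | hk0
    · rw [Multiset.esymmMean_zero]; exact one_pos
    · rw [hmean]; exact div_pos (hGamma k hk0 hk) (by exact_mod_cast Nat.choose_pos (by omega))
  have hmaclaurin : s.esymmMean m ≤ s.esymmMean 1 ^ m :=
    le_pow_of_mul_le_sq hpos (fun k hk => s.esymmMean_mul_esymmMean_le_sq (by omega))
      s.esymmMean_zero le_rfl
  calc ((n.choose m : ℝ)⁻¹ * esymmR n m lam) ^ ((1 : ℝ) / m)
      = s.esymmMean m ^ ((1 : ℝ) / m) := by rw [hmean, inv_mul_eq_div]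
    _ ≤ (s.esymmMean 1 ^ m) ^ ((1 : ℝ) / m) :=
      Real.rpow_le_rpow (hpos m le_rfl).le hmaclaurin (by positivity)
    _ = s.esymmMean 1 := by rw [one_div, Real.pow_rpow_inv_natCast (hpos 1 hm).le (by omega)]
    _ = (1 / n) * esymmR n 1 lam := by rw [hmean, Nat.choose_one_right, one_div_mul_eq_div]
end

section
/- Let $1 \le m \le n$ and $\Lambda_1 \ge \Lambda_2 \ge \cdots \ge \Lambda_n$ be a vector in $\Gamma_m$. Then the smallest partial derivative of $\sigma_m$ satisfies $\sigma_{m-1}(\Lambda | 1) \ge \frac{m}{n \Lambda_1}\, \sigma_m(\Lambda)$, where $\sigma_{m-1}(\Lambda|1)$ denotes $\sigma_{m-1}$ of the vector $\Lambda$ with the first entry removed. -/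
open Finset

/-- The `(m-1)`-th elementary symmetric polynomial of `lam` with the entry `i₀` removed. -/
noncomputable def esymmRemove (n k : ℕ) (i₀ : Fin n) (lam : Fin n → ℝ) : ℝ :=
  ∑ s ∈ Finset.powersetCard k ((Finset.univ : Finset (Fin n)).erase i₀), ∏ i ∈ s, lam i

/-!
Write `Λ|1j` for `Λ` with the entries `1` and `j` removed. Since
`σ_m(Λ) = σ_m(Λ|1) + Λ₁ σ_{m-1}(Λ|1)`, it suffices to show
`m σ_m(Λ|1) ≤ (n - m) Λ₁ σ_{m-1}(Λ|1)`. This is clear if `σ_m(Λ|1) ≤ 0`; otherwise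
`Λ|1 ∈ Γ_m`, so every `σ_{m-1}(Λ|1j)` is positive and
`m σ_m(Λ|1) = ∑ⱼ Λⱼ σ_{m-1}(Λ|1j) ≤ Λ₁ ∑ⱼ σ_{m-1}(Λ|1j) = (n - m) Λ₁ σ_{m-1}(Λ|1)`.

Both steps use that removing an entry maps `Γ_{m+1}` into `Γ_m`, which follows from Newton's
inequality `σ_k σ_{k+2} ≤ σ_{k+1}²`. The latter is proved for the coefficients of a real-rooted
polynomial: by Rolle the derivative is again real-rooted, which moves the inequality down to the
three lowest coefficients, where it follows by induction on the number of roots.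
-/

open Polynomial

section Algebra

variable {ι R : Type*} [CommRing R]

noncomputable def esymmOn (s : Finset ι) (f : ι → R) (k : ℕ) : R :=
  ∑ t ∈ s.powersetCard k, ∏ i ∈ t, f i

variable (s : Finset ι) (f : ι → R)

@[simp]
lemma esymmOn_zero : esymmOn s f 0 = 1 := by
  simp [esymmOn]

variable {s} in
lemma esymmOn_eq_zero_of_card_lt {k : ℕ} (h : #s < k) : esymmOn s f k = 0 := by
  rw [esymmOn, powersetCard_eq_empty.2 h, sum_empty]

variable {s f} in
lemma le_card_of_esymmOn_ne_zero {k : ℕ} (h : esymmOn s f k ≠ 0) : k ≤ #s :=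
  not_lt.1 fun hlt => h (esymmOn_eq_zero_of_card_lt f hlt)

variable [DecidableEq ι]

lemma esymmOn_insert {i : ι} (hi : i ∉ s) (k : ℕ) :
    esymmOn (insert i s) f (k + 1) = esymmOn s f (k + 1) + f i * esymmOn s f k := by
  have hdisj : Disjoint (s.powersetCard (k + 1)) ((s.powersetCard k).image (insert i)) := by
    simp only [disjoint_left, mem_image, mem_powersetCard]
    rintro _ ⟨hts, -⟩ ⟨u, -, rfl⟩
    exact hi (hts (mem_insert_self i u))
  have hinj : Set.InjOn (insert i) (s.powersetCard k : Set (Finset ι)) := fun u hu v hv huv => by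
    rw [mem_coe, mem_powersetCard] at hu hv
    rw [← erase_insert (fun h => hi (hu.1 h)), huv, erase_insert (fun h => hi (hv.1 h))]
  rw [esymmOn, powersetCard_succ_insert hi, sum_union hdisj, sum_image hinj, esymmOn, esymmOn,
    mul_sum]
  congr 1
  exact sum_congr rfl fun u hu => prod_insert fun h => hi ((mem_powersetCard.1 hu).1 h)

variable {s} in
lemma esymmOn_succ_of_mem {i : ι} (hi : i ∈ s) (k : ℕ) :
    esymmOn s f (k + 1) = esymmOn (s.erase i) f (k + 1) + f i * esymmOn (s.erase i) f k := by
  rw [← esymmOn_insert _ _ (notMem_erase i s), insert_erase hi]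

lemma sum_esymmOn_erase (k : ℕ) :
    ∑ i ∈ s, esymmOn (s.erase i) f k = (#s - k) * esymmOn s f k := by
  have hswap : ∑ i ∈ s, esymmOn (s.erase i) f k
      = ∑ t ∈ s.powersetCard k, ∑ _i ∈ s \ t, ∏ j ∈ t, f j := by
    refine sum_comm' fun i t => ?_
    simp only [mem_powersetCard, subset_erase, mem_sdiff]
    tauto
  rw [hswap, esymmOn, mul_sum]
  refine sum_congr rfl fun t ht => ?_
  obtain ⟨hts, rfl⟩ := mem_powersetCard.1 ht
  rw [sum_const, card_sdiff_of_subset hts, nsmul_eq_mul, Nat.cast_sub (card_le_card hts)]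

lemma sum_mul_esymmOn_erase (k : ℕ) :
    ∑ i ∈ s, f i * esymmOn (s.erase i) f k = (k + 1) * esymmOn s f (k + 1) := by
  have hterm : ∀ i ∈ s, f i * esymmOn (s.erase i) f k
      = esymmOn s f (k + 1) - esymmOn (s.erase i) f (k + 1) := fun i hi => by
    rw [esymmOn_succ_of_mem f hi]; ring
  rw [sum_congr rfl hterm, sum_sub_distrib, sum_esymmOn_erase, sum_const, nsmul_eq_mul]
  push_cast
  ring

end Algebra

section Newton

lemma newton_coeff_zero_prod_X_sub_C (s : Multiset ℝ) :
    (2 : ℝ) * s.card * (s.map fun r => X - C r).prod.coeff 0 * (s.map fun r => X - C r).prod.coeff 2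
      ≤ ((s.card : ℝ) - 1) * (s.map fun r => X - C r).prod.coeff 1 ^ 2 := by
  induction s using Multiset.induction_on with
  | empty => simp [coeff_one]
  | cons r s ih =>
    rcases Multiset.empty_or_exists_mem s with rfl | ⟨x, hx⟩
    · simp [coeff_X]
    have hs : (1 : ℝ) ≤ s.card := by exact_mod_cast Multiset.card_pos_iff_exists_mem.2 ⟨x, hx⟩
    simp only [Multiset.map_cons, Multiset.prod_cons, Multiset.card_cons, coeff_X_sub_C_mul,
      mul_coeff_zero, coeff_sub, coeff_X_zero, coeff_C_zero]
    push_cast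
    set q := (s.map fun r => X - C r).prod
    -- With `N = card s`: `N` times the gap is at least `(N q₀ + r q₁)²`, using `r² (N + 1) • ih`.
    have hgap : 0 ≤ s.card * (s.card * (q.coeff 0 - r * q.coeff 1) ^ 2
        - 2 * (s.card + 1) * ((0 - r) * q.coeff 0) * (q.coeff 1 - r * q.coeff 2)) := by
      nlinarith [mul_le_mul_of_nonneg_left ih (mul_nonneg (sq_nonneg r) (by positivity :
        (0 : ℝ) ≤ s.card + 1)), sq_nonneg (s.card * q.coeff 0 + r * q.coeff 1)]
    linarith [(mul_nonneg_iff_of_pos_left (by linarith : (0 : ℝ) < s.card)).1 hgap]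

lemma newton_coeff_zero {p : ℝ[X]} {N : ℕ} (hroots : p.roots.card = N) (hdeg : p.natDegree = N) :
    2 * N * p.coeff 0 * p.coeff 2 ≤ (N - 1) * p.coeff 1 ^ 2 := by
  have hprod := newton_coeff_zero_prod_X_sub_C p.roots
  rw [← C_leadingCoeff_mul_prod_multiset_X_sub_C (hroots.trans hdeg.symm)]
  simp only [coeff_C_mul]
  rw [hroots] at hprod
  nlinarith [mul_le_mul_of_nonneg_left hprod (sq_nonneg p.leadingCoeff)]

lemma card_roots_derivative_of_card_roots {p : ℝ[X]} {N : ℕ} (hroots : p.roots.card = N + 1)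
    (hdeg : p.natDegree = N + 1) :
    (derivative p).roots.card = N ∧ (derivative p).natDegree = N := by
  have h₁ := card_roots_le_derivative p
  have h₂ := card_roots' (derivative p)
  have h₃ := natDegree_derivative_le p
  omega

/-- With `p.coeff j = N.choose j * E j` this is `E j * E (j + 2) ≤ E (j + 1) ^ 2`. -/
theorem newton_coeff {p : ℝ[X]} {N : ℕ} (hroots : p.roots.card = N) (hdeg : p.natDegree = N)
    (j : ℕ) : (j + 2) * (N - j) * p.coeff j * p.coeff (j + 2)
      ≤ (j + 1) * (N - j - 1) * p.coeff (j + 1) ^ 2 := by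
  induction j generalizing p N with
  | zero => simpa using newton_coeff_zero hroots hdeg
  | succ j ih =>
    cases N with
    | zero =>
      have hvanish : ∀ i, p.coeff (i + 1) = 0 := fun i => coeff_eq_zero_of_natDegree_lt (by omega)
      simp [hvanish]
    | succ N =>
      obtain ⟨hroots', hdeg'⟩ := card_roots_derivative_of_card_roots hroots hdeg
      have h := ih hroots' hdeg'
      simp only [coeff_derivative] at h
      push_cast at h ⊢
      have hpos : (0 : ℝ) < (j + 1) * (j + 2) := by positivity
      nlinarith

variable {ι : Type*} (s : Finset ι) (f : ι → ℝ)

lemma card_roots_prod_X_add_C :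
    (∏ i ∈ s, (X + C (f i))).roots.card = #s ∧ (∏ i ∈ s, (X + C (f i))).natDegree = #s := by
  have hprod : ∏ i ∈ s, (X + C (f i)) = ((s.val.map fun i => -f i).map fun a => X - C a).prod := by
    simp only [Multiset.map_map, Function.comp_def, map_neg, sub_neg_eq_add]
    rfl
  rw [hprod, roots_multiset_prod_X_sub_C, natDegree_multiset_prod_X_sub_C_eq_card]
  simp

lemma coeff_prod_X_add_C {i : ℕ} (hi : i ≤ #s) :
    (∏ i ∈ s, (X + C (f i))).coeff (#s - i) = esymmOn s f i := by
  rw [prod_X_add_C_coeff _ _ (Nat.sub_le _ _), Nat.sub_sub_self hi]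
  rfl

theorem esymmOn_mul_esymmOn_le_sq (k : ℕ) :
    esymmOn s f k * esymmOn s f (k + 2) ≤ esymmOn s f (k + 1) ^ 2 := by
  rcases lt_or_ge #s (k + 2) with hlt | hle
  · rw [esymmOn_eq_zero_of_card_lt f hlt, mul_zero]
    exact sq_nonneg _
  obtain ⟨j, hj⟩ := Nat.exists_eq_add_of_le' hle
  obtain ⟨hroots, hdeg⟩ := card_roots_prod_X_add_C s f
  have h₀ : (∏ i ∈ s, (X + C (f i))).coeff j = esymmOn s f (k + 2) := by
    rw [show j = #s - (k + 2) by omega, coeff_prod_X_add_C s f hle]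
  have h₁ : (∏ i ∈ s, (X + C (f i))).coeff (j + 1) = esymmOn s f (k + 1) := by
    rw [show j + 1 = #s - (k + 1) by omega, coeff_prod_X_add_C s f (by omega)]
  have h₂ : (∏ i ∈ s, (X + C (f i))).coeff (j + 2) = esymmOn s f k := by
    rw [show j + 2 = #s - k by omega, coeff_prod_X_add_C s f (by omega)]
  have h := newton_coeff hroots hdeg j
  rw [h₀, h₁, h₂, hj] at h
  push_cast at h
  have hweight : ((j : ℝ) + 1) * (k + 1) ≤ (j + 2) * (k + 2) := by nlinarith
  refine le_of_mul_le_mul_left ?_ (by positivity : (0 : ℝ) < (j + 2) * (k + 2))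
  calc ((j : ℝ) + 2) * (k + 2) * (esymmOn s f k * esymmOn s f (k + 2))
      ≤ (j + 1) * (k + 1) * esymmOn s f (k + 1) ^ 2 := by linarith
    _ ≤ (j + 2) * (k + 2) * esymmOn s f (k + 1) ^ 2 :=
      mul_le_mul_of_nonneg_right hweight (sq_nonneg _)

end Newton

section GardingCone

variable {ι : Type*} {s : Finset ι} {f : ι → ℝ} {m : ℕ}

def InGardingCone (m : ℕ) (s : Finset ι) (f : ι → ℝ) : Prop :=
  ∀ k ≤ m, 0 < esymmOn s f k

lemma InGardingCone.mono {l : ℕ} (h : InGardingCone m s f) (hl : l ≤ m) : InGardingCone l s f :=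
  fun k hk => h k (hk.trans hl)

variable [DecidableEq ι]

lemma InGardingCone.erase (h : InGardingCone (m + 1) s f) {i : ι} (hi : i ∈ s) :
    InGardingCone m (s.erase i) f := by
  induction m with
  | zero => intro k hk; simp [Nat.le_zero.1 hk]
  | succ m ih =>
    have hm := ih (h.mono (by omega))
    intro k hk
    rcases hk.lt_or_eq with hk | rfl
    · exact hm k (by omega)
    -- If `σ_{m+1}(s∖i) ≤ 0`, then `f i σ_m(s∖i) > -σ_{m+1}(s∖i) ≥ 0` and
    -- `σ_{m+2}(s∖i) > -f i σ_{m+1}(s∖i)`, so `σ_m σ_{m+2} > σ_{m+1}²` on `s∖i`, against Newton.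
    by_contra! hneg
    have h₁ := h (m + 1) (by omega)
    have h₂ := h (m + 2) le_rfl
    rw [esymmOn_succ_of_mem f hi] at h₁ h₂
    have hnewton := esymmOn_mul_esymmOn_le_sq (s.erase i) f m
    have hpos := hm m le_rfl
    nlinarith

lemma InGardingCone.succ_mul_esymmOn_le {k : ℕ} (hcone : InGardingCone (k + 1) s f) {i : ι}
    (hi : i ∈ s) (hmax : ∀ j ∈ s, f j ≤ f i) :
    (k + 1) * esymmOn s f (k + 1) ≤ #s * f i * esymmOn (s.erase i) f k := by
  set t := s.erase i
  have hsplit := esymmOn_succ_of_mem f hi k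
  have hcard : (#s : ℝ) = #t + 1 := by
    rw [card_erase_of_mem hi]; push_cast [card_pos.2 ⟨i, hi⟩]; ring
  have ht : InGardingCone k t f := hcone.erase hi
  suffices hkey : (k + 1) * esymmOn t f (k + 1) ≤ (#t - k) * f i * esymmOn t f k by
    rw [hsplit, hcard]; linarith
  rcases le_or_gt (esymmOn t f (k + 1)) 0 with hnonpos | hpos
  · have hk : (k : ℝ) ≤ #t := by exact_mod_cast le_card_of_esymmOn_ne_zero (ht k le_rfl).ne'
    have hfi : 0 ≤ f i * esymmOn t f k := by linarith [hcone (k + 1) le_rfl]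
    nlinarith
  · have ht' : InGardingCone (k + 1) t f := fun l hl =>
      (Nat.le_succ_iff.1 hl).elim (ht l) (fun h => h ▸ hpos)
    calc (k + 1) * esymmOn t f (k + 1) = ∑ j ∈ t, f j * esymmOn (t.erase j) f k :=
          (sum_mul_esymmOn_erase t f k).symm
      _ ≤ ∑ j ∈ t, f i * esymmOn (t.erase j) f k := sum_le_sum fun j hj =>
          mul_le_mul_of_nonneg_right (hmax j (mem_of_mem_erase hj)) ((ht'.erase hj) k le_rfl).le
      _ = (#t - k) * f i * esymmOn t f k := by rw [← mul_sum, sum_esymmOn_erase]; ring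

end GardingCone

theorem sigma_remove_lower_bound_general (n m : ℕ) (hn : 1 ≤ n) (hm : 1 ≤ m)
    (Λ : Fin n → ℝ) (hdec : ∀ i j : Fin n, i ≤ j → Λ j ≤ Λ i)
    (hGamma : ∀ k, 1 ≤ k → k ≤ m → 0 < esymmR n k Λ) :
    esymmRemove n (m - 1) ⟨0, hn⟩ Λ ≥
      (m : ℝ) / (n * Λ ⟨0, hn⟩) * esymmR n m Λ := by
  obtain ⟨k, rfl⟩ := Nat.exists_eq_add_of_le' hm
  have hcone : InGardingCone (k + 1) univ Λ
    | 0, _ => by simp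
    | l + 1, hl => hGamma (l + 1) l.succ_pos hl
  have hkey := hcone.succ_mul_esymmOn_le (mem_univ ⟨0, hn⟩) fun j _ => hdec _ _ (Nat.zero_le _)
  rw [card_univ, Fintype.card_fin] at hkey
  have hrem : 0 < esymmOn (univ.erase ⟨0, hn⟩) Λ k := hcone.erase (mem_univ _) k le_rfl
  have hΛ : 0 < n * Λ ⟨0, hn⟩ :=
    pos_of_mul_pos_left (by nlinarith [hcone (k + 1) le_rfl]) hrem.le
  change esymmOn _ Λ k ≥ _ / _ * esymmOn univ Λ (k + 1)
  rw [ge_iff_le, div_mul_eq_mul_div, div_le_iff₀ hΛ]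
  push_cast
  linarith

/-- Chou–Wang / Hou–Ma–Wu: for a decreasing vector `Λ ∈ Γ_m`,
`σ_{m-1}(Λ|1) ≥ (m / (n Λ₁)) σ_m(Λ)`. -/
theorem sigma_remove_lower_bound (n m : ℕ) (hn : 1 ≤ n) (hm : 1 ≤ m) (hmn : m ≤ n)
    (Λ : Fin n → ℝ) (hdec : ∀ i j : Fin n, i ≤ j → Λ j ≤ Λ i)
    (hGamma : ∀ k, 1 ≤ k → k ≤ m → 0 < esymmR n k Λ) :
    esymmRemove n (m - 1) ⟨0, hn⟩ Λ ≥
      (m : ℝ) / (n * Λ ⟨0, hn⟩) * esymmR n m Λ :=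
  sigma_remove_lower_bound_general n m hn hm Λ hdec hGamma
end
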